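/- Let U be a unitary of the form U = P⊗(V − 1) + 1 acting on registers X Γ Γ′ Y, where P = ∑_x |x⟩⟨x|_X ⊗ |x⟩⟨x|_Γ is the equality projector on two n-qubit registers X and Γ, and V is a unitary on Γ′Y with ‖V − 1‖ ≤ 2. Let P̄ = |Φ⟩⟨Φ|_Γ ⊗ Q′ where |Φ⟩ is the uniform superposition on Γ and Q′ is any projector on further registers disjoint from X, Γ′, Y. Then ‖[U, P̄]‖ ≤ 4·2^{−n/2}. -/
import Mathlib


open scoped Matrix

variable {W Z : Type*}

/-- The unitary `U = P⁼_{XΓ} ⊗ (V − 1)_{Γ′Y} + 1` on registers `X Γ Γ′ Y`, where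
`P⁼` is the computational-basis equality projector on the `n`-qubit registers `X, Γ`,
`V` is a unitary on `Γ′Y` (modelled by the factor `W`), and `Z` collects any further
registers (on which `U` acts as the identity).  Basis states are indexed by
`(x, γ, w, z)`. -/
noncomputable def ctrlU (n : ℕ) [Fintype W] [DecidableEq W] [Fintype Z] [DecidableEq Z]
    (V : Matrix W W ℂ) :
    Matrix ((Fin n → Bool) × (Fin n → Bool) × W × Z)
           ((Fin n → Bool) × (Fin n → Bool) × W × Z) ℂ :=
  fun p q =>
    (if p.1 = p.2.1 ∧ q.1 = p.1 ∧ q.2.1 = p.2.1 ∧ q.2.2.2 = p.2.2.2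
      then (V - 1) p.2.2.1 q.2.2.1 else 0) + (if q = p then 1 else 0)

/-- The projector `P̄ = 1_X ⊗ |Φ⟩⟨Φ|_Γ ⊗ 1_{Γ′Y} ⊗ Q′_Z`, where `|Φ⟩` is the uniform
superposition on the `n`-qubit register `Γ` and `Q′` is a projector on the further
registers `Z`. -/
noncomputable def phiQProj (n : ℕ) [Fintype W] [DecidableEq W] [Fintype Z] [DecidableEq Z]
    (Q' : Matrix Z Z ℂ) :
    Matrix ((Fin n → Bool) × (Fin n → Bool) × W × Z)
           ((Fin n → Bool) × (Fin n → Bool) × W × Z) ℂ :=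
  fun p q =>
    if p.1 = q.1 ∧ p.2.2.1 = q.2.2.1
      then ((2 : ℂ) ^ n)⁻¹ * Q' p.2.2.2 q.2.2.2 else 0

set_option synthInstance.maxHeartbeats 1000000
set_option maxHeartbeats 1000000
open Finset

section generalHelpers


open Finset

lemma euclid_apply {ι : Type*} [Fintype ι] [DecidableEq ι] (M : Matrix ι ι ℂ)
    (v : EuclideanSpace ℂ ι) (i : ι) :
    (Matrix.toEuclideanCLM (𝕜 := ℂ) M v) i = ∑ j, M i j * v j := rfl

lemma sq_norm_euclid {ι : Type*} [Fintype ι] (v : EuclideanSpace ℂ ι) :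
    ‖v‖ ^ 2 = ∑ i, ‖v i‖ ^ 2 := by
  rw [EuclideanSpace.norm_eq, Real.sq_sqrt]; positivity

lemma mulvec_sq_bound {ι : Type*} [Fintype ι] [DecidableEq ι] (M : Matrix ι ι ℂ) (v : ι → ℂ) :
    ∑ i, ‖∑ j, M i j * v j‖ ^ 2 ≤ ‖Matrix.toEuclideanCLM (𝕜 := ℂ) M‖ ^ 2 * ∑ i, ‖v i‖ ^ 2 := by
  set w : EuclideanSpace ℂ ι := (WithLp.equiv _ _).symm v with hw
  have h := (Matrix.toEuclideanCLM (𝕜 := ℂ) M).le_opNorm w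
  have h2 : ‖Matrix.toEuclideanCLM (𝕜 := ℂ) M w‖ ^ 2 ≤
      ‖Matrix.toEuclideanCLM (𝕜 := ℂ) M‖ ^ 2 * ‖w‖ ^ 2 := by
    rw [← mul_pow]; exact pow_le_pow_left₀ (norm_nonneg _) h 2
  rw [sq_norm_euclid, sq_norm_euclid] at h2
  exact h2

lemma norm_clm_le {ι : Type*} [Fintype ι] [DecidableEq ι] (M : Matrix ι ι ℂ) {c : ℝ} (hc : 0 ≤ c)
    (h : ∀ v : ι → ℂ, ∑ i, ‖∑ j, M i j * v j‖ ^ 2 ≤ c ^ 2 * ∑ i, ‖v i‖ ^ 2) :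
    ‖Matrix.toEuclideanCLM (𝕜 := ℂ) M‖ ≤ c := by
  apply ContinuousLinearMap.opNorm_le_bound _ hc
  intro v
  have hv := h (fun i => v i)
  have h1 : ‖Matrix.toEuclideanCLM (𝕜 := ℂ) M v‖ ^ 2 ≤ (c * ‖v‖) ^ 2 := by
    rw [sq_norm_euclid, mul_pow, sq_norm_euclid]
    simpa [euclid_apply] using hv
  calc ‖Matrix.toEuclideanCLM (𝕜 := ℂ) M v‖
      = Real.sqrt (‖Matrix.toEuclideanCLM (𝕜 := ℂ) M v‖ ^ 2) := by
        rw [Real.sqrt_sq (norm_nonneg _)]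
    _ ≤ Real.sqrt ((c * ‖v‖) ^ 2) := Real.sqrt_le_sqrt h1
    _ = c * ‖v‖ := Real.sqrt_sq (by positivity)

lemma kron_norm_le {ι α β : Type*} [Fintype ι] [DecidableEq ι] [Fintype α] [DecidableEq α]
    [Fintype β] [DecidableEq β] (e : ι ≃ α × β) (M : Matrix ι ι ℂ)
    (B : Matrix α α ℂ) (C : Matrix β β ℂ)
    (hM : ∀ p q, M p q = B (e p).1 (e q).1 * C (e p).2 (e q).2) :
    ‖Matrix.toEuclideanCLM (𝕜 := ℂ) M‖ ≤
      ‖Matrix.toEuclideanCLM (𝕜 := ℂ) B‖ * ‖Matrix.toEuclideanCLM (𝕜 := ℂ) C‖ := by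
  set nB := ‖Matrix.toEuclideanCLM (𝕜 := ℂ) B‖ with hnB
  set nC := ‖Matrix.toEuclideanCLM (𝕜 := ℂ) C‖ with hnC
  apply norm_clm_le _ (mul_nonneg (norm_nonneg _) (norm_nonneg _))
  intro v
  set N : α → β → ℂ := fun a b => v (e.symm (a, b)) with hN
  set L : α → β → ℂ := fun a b => ∑ b', C b b' * N a b' with hL
  have hMv : ∀ i, ∑ j, M i j * v j = ∑ a, B (e i).1 a * L a (e i).2 := by
    intro i
    calc ∑ j, M i j * v j = ∑ p : α × β, M i (e.symm p) * v (e.symm p) :=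
          (Equiv.sum_comp e.symm (fun j => M i j * v j)).symm
      _ = ∑ p : α × β, B (e i).1 p.1 * (C (e i).2 p.2 * N p.1 p.2) := by
          apply Finset.sum_congr rfl; intro p _
          rw [hM]; simp [N, mul_assoc]
      _ = ∑ a, ∑ b, B (e i).1 a * (C (e i).2 b * N a b) := Fintype.sum_prod_type _
      _ = ∑ a, B (e i).1 a * L a (e i).2 := by
          simp [L, Finset.mul_sum]
  calc ∑ i, ‖∑ j, M i j * v j‖ ^ 2
      = ∑ i, ‖∑ a, B (e i).1 a * L a (e i).2‖ ^ 2 := by simp only [hMv]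
    _ = ∑ p : α × β, ‖∑ a, B p.1 a * L a p.2‖ ^ 2 :=
        (Equiv.sum_comp e (fun p : α × β => ‖∑ a, B p.1 a * L a p.2‖ ^ 2))
    _ = ∑ b, ∑ a, ‖∑ a', B a a' * L a' b‖ ^ 2 := by
        rw [Fintype.sum_prod_type]; exact Finset.sum_comm
    _ ≤ ∑ b, nB ^ 2 * ∑ a', ‖L a' b‖ ^ 2 :=
        Finset.sum_le_sum fun b _ => mulvec_sq_bound B (fun a => L a b)
    _ = nB ^ 2 * ∑ a, ∑ b, ‖L a b‖ ^ 2 := by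
        rw [← Finset.mul_sum]; congr 1; exact Finset.sum_comm
    _ ≤ nB ^ 2 * ∑ a, nC ^ 2 * ∑ b', ‖N a b'‖ ^ 2 := by
        apply mul_le_mul_of_nonneg_left _ (by positivity)
        exact Finset.sum_le_sum fun a _ => mulvec_sq_bound C (N a)
    _ = (nB * nC) ^ 2 * ∑ p : α × β, ‖v (e.symm p)‖ ^ 2 := by
        rw [← Finset.mul_sum, Fintype.sum_prod_type, mul_pow]; ring
    _ = (nB * nC) ^ 2 * ∑ i, ‖v i‖ ^ 2 := by
        rw [Equiv.sum_comp e.symm (fun i => ‖v i‖ ^ 2)]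

lemma proj_norm_le {ι : Type*} [Fintype ι] [DecidableEq ι] (M : Matrix ι ι ℂ)
    (h1 : Mᴴ = M) (h2 : M * M = M) : ‖Matrix.toEuclideanCLM (𝕜 := ℂ) M‖ ≤ 1 := by
  set a := Matrix.toEuclideanCLM (𝕜 := ℂ) M with ha
  have hmul : a * a = a := by rw [ha, ← map_mul, h2]
  have hstar : star a = a := by
    rw [ha, ← map_star, Matrix.star_eq_conjTranspose, h1]
  have hn : ‖a‖ * ‖a‖ = ‖a‖ := by
    conv_lhs => rw [← CStarRing.norm_star_mul_self, hstar, hmul]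
  nlinarith [norm_nonneg a]

lemma norm_sq_eq_mul_conjTranspose {ι : Type*} [Fintype ι] [DecidableEq ι] (M : Matrix ι ι ℂ) :
    ‖Matrix.toEuclideanCLM (𝕜 := ℂ) M‖ ^ 2 = ‖Matrix.toEuclideanCLM (𝕜 := ℂ) (M * Mᴴ)‖ := by
  rw [map_mul]
  have : Matrix.toEuclideanCLM (𝕜 := ℂ) Mᴴ = star (Matrix.toEuclideanCLM (𝕜 := ℂ) M) := by
    rw [← map_star, Matrix.star_eq_conjTranspose]
  rw [this, sq]
  exact (CStarRing.norm_self_mul_star (x := Matrix.toEuclideanCLM (𝕜 := ℂ) M)).symm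

lemma clm_smul {ι : Type*} [Fintype ι] [DecidableEq ι] (c : ℂ) (M : Matrix ι ι ℂ) :
    ‖Matrix.toEuclideanCLM (𝕜 := ℂ) (c • M)‖ = ‖c‖ * ‖Matrix.toEuclideanCLM (𝕜 := ℂ) M‖ := by
  rw [map_smul]
  exact norm_smul c (Matrix.toEuclideanCLM (𝕜 := ℂ) M)

lemma norm_sq_eq_conjTranspose_mul {ι : Type*} [Fintype ι] [DecidableEq ι] (M : Matrix ι ι ℂ) :
    ‖Matrix.toEuclideanCLM (𝕜 := ℂ) M‖ ^ 2 = ‖Matrix.toEuclideanCLM (𝕜 := ℂ) (Mᴴ * M)‖ := by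
  rw [map_mul]
  have : Matrix.toEuclideanCLM (𝕜 := ℂ) Mᴴ = star (Matrix.toEuclideanCLM (𝕜 := ℂ) M) := by
    rw [← map_star, Matrix.star_eq_conjTranspose]
  rw [this, sq]
  exact (CStarRing.norm_star_mul_self (x := Matrix.toEuclideanCLM (𝕜 := ℂ) M)).symm

end generalHelpers

section aux
variable (n : ℕ) [Fintype W] [DecidableEq W] [Fintype Z] [DecidableEq Z]

noncomputable def auxA (V : Matrix W W ℂ) :
    Matrix ((Fin n → Bool) × (Fin n → Bool) × W × Z)
           ((Fin n → Bool) × (Fin n → Bool) × W × Z) ℂ :=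
  fun p q =>
    if p.1 = p.2.1 ∧ q.1 = p.1 ∧ q.2.1 = p.2.1 ∧ q.2.2.2 = p.2.2.2
      then (V - 1) p.2.2.1 q.2.2.1 else 0

noncomputable def auxF1 :
    Matrix ((Fin n → Bool) × (Fin n → Bool)) ((Fin n → Bool) × (Fin n → Bool)) ℂ :=
  fun a b => if a.1 = a.2 ∧ b.1 = a.1 then 1 else 0

noncomputable def auxF2 :
    Matrix ((Fin n → Bool) × (Fin n → Bool)) ((Fin n → Bool) × (Fin n → Bool)) ℂ :=
  fun a b => if b.1 = a.1 ∧ b.2 = a.1 then 1 else 0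

noncomputable def auxD :
    Matrix ((Fin n → Bool) × (Fin n → Bool)) ((Fin n → Bool) × (Fin n → Bool)) ℂ :=
  fun a b => if a = b ∧ a.1 = a.2 then 1 else 0

noncomputable def auxC (V : Matrix W W ℂ) (Q' : Matrix Z Z ℂ) :
    Matrix (W × Z) (W × Z) ℂ :=
  fun u u' => (V - 1) u.1 u'.1 * Q' u.2 u'.2

noncomputable def auxM1 (V : Matrix W W ℂ) (Q' : Matrix Z Z ℂ) :
    Matrix ((Fin n → Bool) × (Fin n → Bool) × W × Z)
           ((Fin n → Bool) × (Fin n → Bool) × W × Z) ℂ :=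
  fun p q => auxF1 n (p.1, p.2.1) (q.1, q.2.1) *
    auxC V Q' (p.2.2.1, p.2.2.2) (q.2.2.1, q.2.2.2)

noncomputable def auxM2 (V : Matrix W W ℂ) (Q' : Matrix Z Z ℂ) :
    Matrix ((Fin n → Bool) × (Fin n → Bool) × W × Z)
           ((Fin n → Bool) × (Fin n → Bool) × W × Z) ℂ :=
  fun p q => auxF2 n (p.1, p.2.1) (q.1, q.2.1) *
    auxC V Q' (p.2.2.1, p.2.2.2) (q.2.2.1, q.2.2.2)

lemma ctrlU_eq (V : Matrix W W ℂ) : ctrlU n (W := W) (Z := Z) V = auxA n V + 1 := by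
  ext p q
  simp only [ctrlU, auxA, Matrix.add_apply, Matrix.one_apply]
  congr 1
  simp [eq_comm]

lemma auxA_mul_phiQProj (V : Matrix W W ℂ) (Q' : Matrix Z Z ℂ) :
    auxA n V * phiQProj n Q' = ((2:ℂ)^n)⁻¹ • auxM1 n V Q' := by
  ext p q
  rw [Matrix.mul_apply]
  by_cases hp : p.1 = p.2.1
  · by_cases hq : q.1 = p.1
    · rw [Finset.sum_eq_single (p.1, p.2.1, q.2.2.1, p.2.2.2)]
      · simp only [auxA, phiQProj, auxM1, auxF1, auxC, Matrix.smul_apply, smul_eq_mul,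
          hp, hq, and_true, if_true, true_and, hq.symm]
        ring
      · intro r _ hr
        simp only [auxA, phiQProj]
        split_ifs with h1 h2
        · obtain ⟨-, a, b, c⟩ := h1
          obtain ⟨-, d⟩ := h2
          exact absurd (by simp only [Prod.ext_iff]; exact ⟨a, b, d, c⟩) hr
        all_goals simp
      · exact fun h => absurd (Finset.mem_univ _) h
    · rw [Finset.sum_eq_zero]
      · simp [auxM1, auxF1, hq]
      · intro r _
        simp only [auxA, phiQProj]
        split_ifs with h1 h2
        · exact absurd (h2.1 ▸ h1.2.1) hq
        all_goals simp
  · rw [Finset.sum_eq_zero]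
    · simp [auxM1, auxF1, hp]
    · intro r _
      simp only [auxA]
      rw [if_neg (fun h => hp h.1), zero_mul]

lemma phiQProj_mul_auxA (V : Matrix W W ℂ) (Q' : Matrix Z Z ℂ) :
    phiQProj n Q' * auxA n V = ((2:ℂ)^n)⁻¹ • auxM2 n V Q' := by
  ext p q
  rw [Matrix.mul_apply]
  by_cases hq1 : q.1 = p.1
  · by_cases hq2 : q.2.1 = p.1
    · rw [Finset.sum_eq_single (p.1, p.1, p.2.2.1, q.2.2.2)]
      · simp only [auxA, phiQProj, auxM2, auxF2, auxC, Matrix.smul_apply, smul_eq_mul,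
          hq1, hq2, and_true, if_true, true_and]
        simp
        ring
      · intro r _ hr
        simp only [auxA, phiQProj]
        split_ifs with h1 h2
        · obtain ⟨a, b⟩ := h1
          obtain ⟨c, d, e, f⟩ := h2
          exact absurd (show r = (p.1, p.1, p.2.2.1, q.2.2.2) by simp only [Prod.ext_iff]; exact ⟨a.symm, c.symm.trans a.symm, b.symm, f.symm⟩) hr
        all_goals simp
      · exact fun h => absurd (Finset.mem_univ _) h
    · rw [Finset.sum_eq_zero]
      · simp [auxM2, auxF2, hq2]
      · intro r _
        simp only [auxA, phiQProj]
        split_ifs with h1 h2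
        · exact absurd (h2.2.2.1.trans (h2.1.symm.trans h1.1.symm)) hq2
        all_goals simp
  · rw [Finset.sum_eq_zero]
    · simp [auxM2, auxF2, hq1]
    · intro r _
      simp only [auxA, phiQProj]
      split_ifs with h1 h2
      · exact absurd (h2.2.1.trans (h1.1.symm)) hq1
      all_goals simp


lemma card_X : (Fintype.card (Fin n → Bool) : ℂ) = (2:ℂ)^n := by
  simp [Fintype.card_fun]

lemma count_fst (x : Fin n → Bool) :
    ∑ c : (Fin n → Bool) × (Fin n → Bool), (if c.1 = x then (1:ℂ) else 0) = (2:ℂ)^n := by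
  rw [Fintype.sum_prod_type]
  have h1 : ∀ c1 : Fin n → Bool, (∑ _c2 : Fin n → Bool, if c1 = x then (1:ℂ) else 0) =
      if c1 = x then (2:ℂ)^n else 0 := by
    intro c1
    by_cases h : c1 = x <;>
      simp [h, Finset.sum_const, Finset.card_univ, nsmul_eq_mul, card_X]
  simp_rw [h1]
  simp

lemma auxD_conjTranspose : (auxD n)ᴴ = auxD n := by
  ext a b
  simp only [Matrix.conjTranspose_apply, auxD]
  have : (b = a ∧ b.1 = b.2) ↔ (a = b ∧ a.1 = a.2) := by
    constructor <;> rintro ⟨rfl, h⟩ <;> exact ⟨rfl, h⟩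
  rw [if_congr this rfl rfl]
  split <;> simp

lemma auxD_idem : auxD n * auxD n = auxD n := by
  ext a b
  rw [Matrix.mul_apply, Finset.sum_eq_single a]
  · simp only [auxD]
    by_cases h : a.1 = a.2 <;> simp [h]
  · intro c _ hc
    simp only [auxD]
    rw [if_neg (fun h => hc h.1.symm), zero_mul]
  · exact fun h => absurd (Finset.mem_univ _) h

lemma auxF1_mul : auxF1 n * (auxF1 n)ᴴ = ((2:ℂ)^n) • auxD n := by
  ext a b
  rw [Matrix.mul_apply]
  simp only [Matrix.conjTranspose_apply, auxF1, auxD, Matrix.smul_apply, smul_eq_mul]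
  by_cases ha : a.1 = a.2
  · by_cases hb : b.1 = b.2
    · by_cases hab : a.1 = b.1
      · have hba : a = b := by
          simp only [Prod.ext_iff]; exact ⟨hab, ha.symm.trans (hab.trans hb)⟩
        rw [show (∑ c : (Fin n → Bool) × (Fin n → Bool),
            (if a.1 = a.2 ∧ c.1 = a.1 then (1:ℂ) else 0) *
              star (if b.1 = b.2 ∧ c.1 = b.1 then (1:ℂ) else 0)) =
            ∑ c : (Fin n → Bool) × (Fin n → Bool), (if c.1 = a.1 then (1:ℂ) else 0) from
          Finset.sum_congr rfl fun c _ => by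
            rw [← hba]
            by_cases hc : c.1 = a.1
            · rw [if_pos ⟨ha, hc⟩, star_one, mul_one, if_pos hc]
            · rw [if_neg (fun h => hc h.2), zero_mul, if_neg hc], count_fst]
        rw [if_pos ⟨hba, ha⟩, mul_one]
      · rw [Finset.sum_eq_zero, if_neg (fun h => hab (by rw [h.1])), mul_zero]
        intro c _
        by_cases h1 : a.1 = a.2 ∧ c.1 = a.1
        · rw [if_pos h1, one_mul, if_neg (fun h => hab (h1.2.symm.trans h.2)), star_zero]
        · rw [if_neg h1, zero_mul]
    · rw [Finset.sum_eq_zero, if_neg (fun h => hb (by rw [← h.1]; exact h.2)), mul_zero]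
      intro c _
      rw [if_neg (fun h : b.1 = b.2 ∧ c.1 = b.1 => hb h.1), star_zero, mul_zero]
  · rw [Finset.sum_eq_zero, if_neg (fun h => ha h.2), mul_zero]
    intro c _
    rw [if_neg (fun h : a.1 = a.2 ∧ c.1 = a.1 => ha h.1), zero_mul]

lemma auxF2_mul : (auxF2 n)ᴴ * auxF2 n = ((2:ℂ)^n) • auxD n := by
  ext a b
  rw [Matrix.mul_apply]
  simp only [Matrix.conjTranspose_apply, auxF2, auxD, Matrix.smul_apply, smul_eq_mul]
  by_cases ha : a.1 = a.2
  · by_cases hb : b.1 = b.2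
    · by_cases hab : a.1 = b.1
      · have hba : a = b := by
          simp only [Prod.ext_iff]; exact ⟨hab, ha.symm.trans (hab.trans hb)⟩
        rw [show (∑ c : (Fin n → Bool) × (Fin n → Bool),
            star (if a.1 = c.1 ∧ a.2 = c.1 then (1:ℂ) else 0) *
              (if b.1 = c.1 ∧ b.2 = c.1 then (1:ℂ) else 0)) =
            ∑ c : (Fin n → Bool) × (Fin n → Bool), (if c.1 = a.1 then (1:ℂ) else 0) from
          Finset.sum_congr rfl fun c _ => by
            rw [← hba]
            by_cases hc : c.1 = a.1
            · rw [if_pos ⟨hc.symm, ha.symm.trans hc.symm⟩, star_one, one_mul, if_pos hc]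
            · rw [if_neg (fun h => hc h.1.symm), star_zero, zero_mul, if_neg hc], count_fst]
        rw [if_pos ⟨hba, ha⟩, mul_one]
      · rw [Finset.sum_eq_zero, if_neg (fun h => hab (by rw [h.1])), mul_zero]
        intro c _
        by_cases h1 : a.1 = c.1 ∧ a.2 = c.1
        · rw [if_pos h1, star_one, one_mul, if_neg (fun h => hab (h1.1.trans h.1.symm))]
        · rw [if_neg h1, star_zero, zero_mul]
    · rw [Finset.sum_eq_zero, if_neg (fun h => hb (by rw [← h.1]; exact h.2)), mul_zero]
      intro c _
      rw [if_neg (fun h : b.1 = c.1 ∧ b.2 = c.1 => hb (h.1.trans h.2.symm)), mul_zero]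
  · rw [Finset.sum_eq_zero, if_neg (fun h => ha h.2), mul_zero]
    intro c _
    rw [if_neg (fun h : a.1 = c.1 ∧ a.2 = c.1 => ha (h.1.trans h.2.symm)), star_zero, zero_mul]

def eSplit [Fintype W] [DecidableEq W] [Fintype Z] [DecidableEq Z] (n : ℕ) :
    ((Fin n → Bool) × (Fin n → Bool) × W × Z) ≃
      (((Fin n → Bool) × (Fin n → Bool)) × (W × Z)) where
  toFun p := ((p.1, p.2.1), (p.2.2.1, p.2.2.2))
  invFun r := (r.1.1, r.1.2, r.2.1, r.2.2)
  left_inv p := rfl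
  right_inv r := rfl

end aux

/-- For `U = P⁼ ⊗ (V − 1) + 1` with `V` unitary, `‖V − 1‖ ≤ 2`, and
`P̄ = 1_X ⊗ |Φ⟩⟨Φ|_Γ ⊗ 1 ⊗ Q′` with `Q′` a projector on disjoint registers, the
commutator satisfies `‖[U, P̄]‖ ≤ 4·2^{−n/2}`. -/
theorem stmt_8 (n : ℕ) [Fintype W] [DecidableEq W] [Fintype Z] [DecidableEq Z]
    (V : Matrix W W ℂ) (hV : Vᴴ * V = 1)
    (hVn : ‖Matrix.toEuclideanCLM (n := W) (𝕜 := ℂ) (V - 1)‖ ≤ 2)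
    (Q' : Matrix Z Z ℂ) (hQsa : Q'ᴴ = Q') (hQidem : Q' * Q' = Q') :
    ‖Matrix.toEuclideanCLM (𝕜 := ℂ)
        (ctrlU n (W := W) (Z := Z) V * phiQProj n (W := W) (Z := Z) Q' -
         phiQProj n (W := W) (Z := Z) Q' * ctrlU n (W := W) (Z := Z) V)‖ ≤
      4 * (2 : ℝ) ^ (-(n : ℝ) / 2) := by
  classical
  have hcomm : ctrlU n (W := W) (Z := Z) V * phiQProj n (W := W) (Z := Z) Q' -
      phiQProj n (W := W) (Z := Z) Q' * ctrlU n (W := W) (Z := Z) V =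
      ((2:ℂ)^n)⁻¹ • auxM1 n V Q' - ((2:ℂ)^n)⁻¹ • auxM2 n V Q' := by
    rw [ctrlU_eq, ← auxA_mul_phiQProj, ← phiQProj_mul_auxA]
    noncomm_ring
  have hQ : ‖Matrix.toEuclideanCLM (n := Z) (𝕜 := ℂ) Q'‖ ≤ 1 := proj_norm_le Q' hQsa hQidem
  have hC : ‖Matrix.toEuclideanCLM (n := W × Z) (𝕜 := ℂ) (auxC V Q')‖ ≤ 2 := by
    have h := kron_norm_le (Equiv.refl (W × Z)) (auxC V Q') (V - 1) Q' (fun p q => rfl)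
    calc ‖Matrix.toEuclideanCLM (n := W × Z) (𝕜 := ℂ) (auxC V Q')‖
        ≤ ‖Matrix.toEuclideanCLM (n := W) (𝕜 := ℂ) (V - 1)‖ * ‖Matrix.toEuclideanCLM (n := Z) (𝕜 := ℂ) Q'‖ := h
      _ ≤ 2 * 1 := mul_le_mul hVn hQ (norm_nonneg _) (by norm_num)
      _ = 2 := mul_one 2
  have hD : ‖Matrix.toEuclideanCLM (n := (Fin n → Bool) × (Fin n → Bool)) (𝕜 := ℂ) (auxD n)‖ ≤ 1 :=
    proj_norm_le _ (auxD_conjTranspose n) (auxD_idem n)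
  have h2n : ‖((2:ℂ)^n)‖ = (2:ℝ)^n := by
    rw [norm_pow]
    norm_num
  have hF1 : ‖Matrix.toEuclideanCLM (n := (Fin n → Bool) × (Fin n → Bool)) (𝕜 := ℂ) (auxF1 n)‖ ≤ Real.sqrt ((2:ℝ)^n) := by
    have hsq : ‖Matrix.toEuclideanCLM (n := (Fin n → Bool) × (Fin n → Bool)) (𝕜 := ℂ) (auxF1 n)‖ ^ 2 ≤ (2:ℝ)^n := by
      rw [norm_sq_eq_mul_conjTranspose, auxF1_mul, clm_smul, h2n]
      calc (2:ℝ)^n * ‖Matrix.toEuclideanCLM (n := (Fin n → Bool) × (Fin n → Bool)) (𝕜 := ℂ) (auxD n)‖ ≤ (2:ℝ)^n * 1 :=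
            mul_le_mul_of_nonneg_left hD (by positivity)
        _ = (2:ℝ)^n := mul_one _
    rw [← Real.sqrt_sq (norm_nonneg (Matrix.toEuclideanCLM (n := (Fin n → Bool) × (Fin n → Bool)) (𝕜 := ℂ) (auxF1 n)))]
    exact Real.sqrt_le_sqrt hsq
  have hF2 : ‖Matrix.toEuclideanCLM (n := (Fin n → Bool) × (Fin n → Bool)) (𝕜 := ℂ) (auxF2 n)‖ ≤ Real.sqrt ((2:ℝ)^n) := by
    have hsq : ‖Matrix.toEuclideanCLM (n := (Fin n → Bool) × (Fin n → Bool)) (𝕜 := ℂ) (auxF2 n)‖ ^ 2 ≤ (2:ℝ)^n := by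
      rw [norm_sq_eq_conjTranspose_mul, auxF2_mul, clm_smul, h2n]
      calc (2:ℝ)^n * ‖Matrix.toEuclideanCLM (n := (Fin n → Bool) × (Fin n → Bool)) (𝕜 := ℂ) (auxD n)‖ ≤ (2:ℝ)^n * 1 :=
            mul_le_mul_of_nonneg_left hD (by positivity)
        _ = (2:ℝ)^n := mul_one _
    rw [← Real.sqrt_sq (norm_nonneg (Matrix.toEuclideanCLM (n := (Fin n → Bool) × (Fin n → Bool)) (𝕜 := ℂ) (auxF2 n)))]
    exact Real.sqrt_le_sqrt hsq
  have hM1 : ‖Matrix.toEuclideanCLM (n := (Fin n → Bool) × (Fin n → Bool) × W × Z) (𝕜 := ℂ) (auxM1 n V Q')‖ ≤ Real.sqrt ((2:ℝ)^n) * 2 := by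
    have h := kron_norm_le (eSplit (W := W) (Z := Z) n) (auxM1 n V Q') (auxF1 n) (auxC V Q')
      (fun p q => rfl)
    exact le_trans h (mul_le_mul hF1 hC (norm_nonneg _) (Real.sqrt_nonneg _))
  have hM2 : ‖Matrix.toEuclideanCLM (n := (Fin n → Bool) × (Fin n → Bool) × W × Z) (𝕜 := ℂ) (auxM2 n V Q')‖ ≤ Real.sqrt ((2:ℝ)^n) * 2 := by
    have h := kron_norm_le (eSplit (W := W) (Z := Z) n) (auxM2 n V Q') (auxF2 n) (auxC V Q')
      (fun p q => rfl)
    exact le_trans h (mul_le_mul hF2 hC (norm_nonneg _) (Real.sqrt_nonneg _))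
  have hinv : ‖(((2:ℂ)^n)⁻¹)‖ = ((2:ℝ)^n)⁻¹ := by rw [norm_inv, h2n]
  calc ‖Matrix.toEuclideanCLM (𝕜 := ℂ)
        (ctrlU n (W := W) (Z := Z) V * phiQProj n (W := W) (Z := Z) Q' -
         phiQProj n (W := W) (Z := Z) Q' * ctrlU n (W := W) (Z := Z) V)‖
      = ‖Matrix.toEuclideanCLM (n := (Fin n → Bool) × (Fin n → Bool) × W × Z) (𝕜 := ℂ) (((2:ℂ)^n)⁻¹ • auxM1 n V Q') -
          Matrix.toEuclideanCLM (n := (Fin n → Bool) × (Fin n → Bool) × W × Z) (𝕜 := ℂ) (((2:ℂ)^n)⁻¹ • auxM2 n V Q')‖ := by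
        rw [hcomm, map_sub]
    _ ≤ ‖Matrix.toEuclideanCLM (n := (Fin n → Bool) × (Fin n → Bool) × W × Z) (𝕜 := ℂ) (((2:ℂ)^n)⁻¹ • auxM1 n V Q')‖ +
          ‖Matrix.toEuclideanCLM (n := (Fin n → Bool) × (Fin n → Bool) × W × Z) (𝕜 := ℂ) (((2:ℂ)^n)⁻¹ • auxM2 n V Q')‖ := norm_sub_le _ _
    _ = ((2:ℝ)^n)⁻¹ * ‖Matrix.toEuclideanCLM (n := (Fin n → Bool) × (Fin n → Bool) × W × Z) (𝕜 := ℂ) (auxM1 n V Q')‖ +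
          ((2:ℝ)^n)⁻¹ * ‖Matrix.toEuclideanCLM (n := (Fin n → Bool) × (Fin n → Bool) × W × Z) (𝕜 := ℂ) (auxM2 n V Q')‖ := by
        rw [clm_smul, clm_smul, hinv]
    _ ≤ ((2:ℝ)^n)⁻¹ * (Real.sqrt ((2:ℝ)^n) * 2) + ((2:ℝ)^n)⁻¹ * (Real.sqrt ((2:ℝ)^n) * 2) :=
        add_le_add (mul_le_mul_of_nonneg_left hM1 (by positivity))
          (mul_le_mul_of_nonneg_left hM2 (by positivity))
    _ = 4 * (2 : ℝ) ^ (-(n : ℝ) / 2) := by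
        have hs : Real.sqrt ((2:ℝ)^n) = (2:ℝ)^((n:ℝ)/2) := by
          rw [show ((2:ℝ)^n) = (2:ℝ)^((n:ℝ)) from (Real.rpow_natCast 2 n).symm,
            Real.sqrt_eq_rpow, ← Real.rpow_mul (by norm_num : (0:ℝ) ≤ 2)]
          ring_nf
        have hi : ((2:ℝ)^n)⁻¹ = (2:ℝ)^(-(n:ℝ)) := by
          rw [show ((2:ℝ)^n) = (2:ℝ)^((n:ℝ)) from (Real.rpow_natCast 2 n).symm,
            ← Real.rpow_neg (by norm_num : (0:ℝ) ≤ 2)]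
        have hmul : (2:ℝ)^(-(n:ℝ)) * (2:ℝ)^((n:ℝ)/2) = (2:ℝ)^(-(n:ℝ)/2) := by
          rw [← Real.rpow_add (by norm_num : (0:ℝ) < 2)]
          ring_nf
        rw [hs, hi]
        calc (2:ℝ)^(-(n:ℝ)) * ((2:ℝ)^((n:ℝ)/2) * 2) + (2:ℝ)^(-(n:ℝ)) * ((2:ℝ)^((n:ℝ)/2) * 2)
            = 4 * ((2:ℝ)^(-(n:ℝ)) * (2:ℝ)^((n:ℝ)/2)) := by ring
          _ = 4 * (2:ℝ)^(-(n:ℝ)/2) := by rw [hmul]
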